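/- arXiv:1807.07924 — 4 statements merged into one kernel-verified Lean document; each statement's English description precedes it below -/
import Mathlib

section
/- Let P be a finite set of points in ℝ^d with all coordinates positive, such that for each coordinate index i, any two distinct i-th coordinate values appearing among points of P differ by a multiplicative factor greater than d (i.e., if α < β are two such values then β/α > d). Let B = [0,b₁] × ⋯ × [0,b_d] where each bᵢ is one of the i-th coordinate values occurring in P. Then for every p ∈ P, p ∈ B if and only if p lies in the half-space H = {x : ∑ᵢ xᵢ/bᵢ ≤ d}. -/
/-- For a finite point set with positive coordinates whose distinct coordinate
values in each coordinate are separated by a multiplicative factor `> d`, and a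
box `B = [0,b₁] × ⋯ × [0,b_d]` whose upper endpoints are coordinate values of
points of `P`, membership of `p ∈ P` in `B` coincides with membership in the
half-space `{x : ∑ᵢ xᵢ/bᵢ ≤ d}`. -/
theorem box_iff_halfspace (d : ℕ) (hd : 1 ≤ d) (P : Finset (Fin d → ℝ))
    (hpos : ∀ p ∈ P, ∀ i, 0 < p i)
    (hsep : ∀ p ∈ P, ∀ q ∈ P, ∀ i : Fin d, p i < q i → (d : ℝ) < q i / p i)
    (b : Fin d → ℝ) (hb : ∀ i, ∃ p ∈ P, b i = p i) :
    ∀ p ∈ P, ((∀ i, 0 ≤ p i ∧ p i ≤ b i) ↔ ∑ i, p i / b i ≤ (d : ℝ)) := by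
  intro p hp
  have hbpos : ∀ i, 0 < b i := by
    intro i
    obtain ⟨q, hq, hqi⟩ := hb i
    rw [hqi]; exact hpos q hq i
  constructor
  · intro h
    calc ∑ i, p i / b i ≤ ∑ _i : Fin d, (1 : ℝ) := by
          apply Finset.sum_le_sum
          intro i _
          exact div_le_one_of_le₀ (h i).2 (hbpos i).le
      _ = d := by simp
  · intro hsum i
    refine ⟨(hpos p hp i).le, ?_⟩
    by_contra hlt
    push_neg at hlt
    obtain ⟨q, hq, hqi⟩ := hb i
    have hd : (d : ℝ) < p i / b i := by
      rw [hqi] at hlt ⊢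
      exact hsep q hq p hp i hlt
    have hle : p i / b i ≤ ∑ j, p j / b j := by
      apply Finset.single_le_sum (f := fun j => p j / b j) _ (Finset.mem_univ i)
      intro j _
      exact div_nonneg (hpos p hp j).le (hbpos j).le
    linarith
end

section
/- Let (X, R) be a set system with VC-dimension d < ∞ and let k ≥ 1. Then the VC-dimension of the k-fold union R^{k∪} is at most c·d·k·log₂(k+1) for some absolute constant c (e.g., one may take the bound 2dk·log₂(3k)). -/
def Shatters {X : Type*} (R : Set (Set X)) (Y : Set X) : Prop :=
  ∀ Z ⊆ Y, ∃ S ∈ R, Y ∩ S = Z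

noncomputable def VCdim {X : Type*} (R : Set (Set X)) : ℕ∞ :=
  ⨆ (Y : Finset X) (_ : Shatters R ↑Y), (Y.card : ℕ∞)

def kUnion {X : Type*} (R : Set (Set X)) (k : ℕ) : Set (Set X) :=
  {T | ∃ f : Fin k → Set X, (∀ i, f i ∈ R) ∧ T = ⋃ i, f i}

/-!
If `kUnion R k` shatters `Y`, every subset of `Y` is a union of `k` traces `Y ∩ S` with
`S ∈ R`, so `2 ^ #Y ≤ #(R|Y) ^ k`. By Sauer–Shelah, `#(R|Y) ≤ ∑_{i ≤ d} C(#Y, i) ≤ (e #Y / d) ^ d`.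
Taking logarithms, `u = #Y / (d k)` satisfies `u log 2 ≤ 1 + log (u k)`, which forces
`u ≤ 8 log₂ (k + 1)`.
-/

open Finset

section Trace

variable {X : Type*}

open Classical in
noncomputable def traceFamily (R : Set (Set X)) (Y : Finset X) : Finset (Finset X) :=
  Y.powerset.filter fun B => ∃ S ∈ R, (Y : Set X) ∩ S = B

lemma mem_traceFamily {R : Set (Set X)} {Y B : Finset X} :
    B ∈ traceFamily R Y ↔ B ⊆ Y ∧ ∃ S ∈ R, (Y : Set X) ∩ S = B := by
  classical
  simp [traceFamily]

lemma filter_mem_traceFamily {R : Set (Set X)} {S : Set X} (hS : S ∈ R) (Y : Finset X)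
    [DecidablePred (· ∈ S)] : Y.filter (· ∈ S) ∈ traceFamily R Y :=
  mem_traceFamily.2 ⟨filter_subset _ _, S, hS, by ext; simp⟩

lemma shatters_of_shatters_traceFamily [DecidableEq X] {R : Set (Set X)} {Y B : Finset X}
    (hB : (traceFamily R Y).Shatters B) : Shatters R B := by
  classical
  intro Z hZ
  obtain ⟨u, hu, hBu⟩ := hB (filter_subset (· ∈ Z) B)
  obtain ⟨-, S, hS, hYS⟩ := mem_traceFamily.1 hu
  obtain ⟨v, hv, hBv⟩ := hB.exists_superset
  have hBY : (B : Set X) ⊆ Y := by exact_mod_cast hBv.trans (mem_traceFamily.1 hv).1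
  refine ⟨S, hS, ?_⟩
  calc (B : Set X) ∩ S = (B : Set X) ∩ (Y ∩ S) := by
        rw [← Set.inter_assoc, Set.inter_eq_left.2 hBY]
    _ = ↑(B ∩ u) := by rw [hYS, coe_inter]
    _ = ↑(B.filter (· ∈ Z)) := by rw [hBu]
    _ = Z := by ext x; simpa using fun h => hZ h

lemma card_le_of_shatters {R : Set (Set X)} {d : ℕ} (hR : VCdim R ≤ d) {B : Finset X}
    (hB : Shatters R B) : #B ≤ d := by
  have : (#B : ℕ∞) ≤ VCdim R :=
    le_iSup₂ (f := fun (Y : Finset X) (_ : Shatters R Y) => (#Y : ℕ∞)) B hB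
  exact_mod_cast this.trans hR

lemma card_traceFamily_le {R : Set (Set X)} {d : ℕ} (hR : VCdim R ≤ d) (Y : Finset X) :
    #(traceFamily R Y) ≤ #(Y.powerset.filter (#· ≤ d)) := by
  classical
  refine (card_le_card_shatterer _).trans (card_le_card fun B hB => ?_)
  have hB := mem_shatterer.1 hB
  obtain ⟨v, hv, hBv⟩ := hB.exists_superset
  exact mem_filter.2 ⟨mem_powerset.2 (hBv.trans (mem_traceFamily.1 hv).1),
    card_le_of_shatters hR (shatters_of_shatters_traceFamily hB)⟩

lemma two_pow_card_le_card_traceFamily_pow {R : Set (Set X)} {k : ℕ} {Y : Finset X}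
    (hY : Shatters (kUnion R k) Y) : 2 ^ #Y ≤ #(traceFamily R Y) ^ k := by
  classical
  have hcover : Y.powerset ⊆
      (Fintype.piFinset fun _ : Fin k => traceFamily R Y).image fun g => univ.sup g := by
    intro Z hZ
    obtain ⟨T, ⟨f, hf, rfl⟩, hYT⟩ := hY Z (by exact_mod_cast mem_powerset.1 hZ)
    refine mem_image.2 ⟨fun i => Y.filter (· ∈ f i),
      Fintype.mem_piFinset.2 fun i => filter_mem_traceFamily (hf i) Y, ?_⟩
    ext x
    have := congrArg (x ∈ ·) hYT
    simp only [Set.mem_inter_iff, Set.mem_iUnion, mem_coe, eq_iff_iff] at this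
    simp [mem_sup, ← this]
  calc 2 ^ #Y = #Y.powerset := (card_powerset Y).symm
    _ ≤ _ := (card_le_card hcover).trans card_image_le
    _ = #(traceFamily R Y) ^ k := by simp

end Trace

section Counting

open Real

lemma card_filter_card_le_mul_pow_le {α : Type*} (Y : Finset α) (d : ℕ) {x : ℝ}
    (hx₀ : 0 ≤ x) (hx₁ : x ≤ 1) :
    #(Y.powerset.filter (#· ≤ d)) * x ^ d ≤ (1 + x) ^ #Y := by
  calc #(Y.powerset.filter (#· ≤ d)) * x ^ d
      = ∑ B ∈ Y.powerset.filter (#· ≤ d), x ^ d := by rw [sum_const, nsmul_eq_mul]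
    _ ≤ ∑ B ∈ Y.powerset.filter (#· ≤ d), x ^ #B :=
        sum_le_sum fun B hB => pow_le_pow_of_le_one hx₀ hx₁ (mem_filter.1 hB).2
    _ ≤ ∑ B ∈ Y.powerset, x ^ #B :=
        sum_le_sum_of_subset_of_nonneg (filter_subset _ _) fun _ _ _ => by positivity
    _ = (1 + x) ^ #Y := by
        simpa [add_comm] using sum_pow_mul_eq_add_pow x (1 : ℝ) Y

lemma card_filter_card_le_le_exp_mul_pow {α : Type*} {Y : Finset α} {d : ℕ} (hd : 0 < d)
    (hdY : d ≤ #Y) : #(Y.powerset.filter (#· ≤ d)) ≤ (exp 1 * #Y / d) ^ d := by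
  have hm : (0 : ℝ) < #Y := by exact_mod_cast hd.trans_le hdY
  set x : ℝ := d / #Y with hx
  have hx₀ : 0 < x := by positivity
  have hx₁ : x ≤ 1 := div_le_one_of_le₀ (by exact_mod_cast hdY) hm.le
  have hexp : (1 + x) ^ #Y ≤ exp 1 ^ d := by
    calc (1 + x) ^ #Y ≤ exp x ^ #Y := by gcongr; linarith [add_one_le_exp x]
      _ = exp 1 ^ d := by rw [← exp_nat_mul, ← exp_nat_mul, hx]; field_simp
  have hxd : exp 1 * #Y / d = exp 1 / x := by rw [hx]; field_simp
  rw [hxd, div_pow, le_div_iff₀ (by positivity)]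
  exact (card_filter_card_le_mul_pow_le Y d hx₀.le hx₁).trans hexp

lemma le_eight_mul_logb_of_mul_log_two_le {u k : ℝ} (hu : 0 < u) (hk : 1 ≤ k)
    (h : u * log 2 ≤ 1 + log (u * k)) : u ≤ 8 * logb 2 (k + 1) := by
  -- `log (u / 4) ≤ u / 4 - 1` makes the hypothesis linear in `u`.
  have hlog_u : log u ≤ u / 4 - 1 + 2 * log 2 := by
    have := log_le_sub_one_of_pos (show 0 < u / 4 by positivity)
    rw [log_div hu.ne' (by norm_num), show (4 : ℝ) = 2 ^ 2 by norm_num, log_pow] at this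
    push_cast at this
    linarith
  have hlog_k : log k ≤ log (k + 1) := log_le_log (by linarith) (by linarith)
  have hlog_two : log 2 ≤ log (k + 1) := log_le_log (by norm_num) (by linarith)
  have hlog_two_gt := log_two_gt_d9
  rw [log_mul hu.ne' (by positivity)] at h
  rw [logb, mul_div_assoc', le_div_iff₀ (log_pos one_lt_two)]
  nlinarith [mul_le_mul_of_nonneg_left hlog_two_gt.le hu.le]

lemma le_eight_mul_logb_of_two_pow_le {m d k : ℕ} (hm : 0 < m) (hd : 0 < d) (hk : 1 ≤ k)
    (h : (2 : ℝ) ^ m ≤ ((exp 1 * m / d) ^ d) ^ k) : (m : ℝ) ≤ 8 * d * k * logb 2 (k + 1) := by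
  have hdk : (0 : ℝ) < d * k := by positivity
  set u : ℝ := m / (d * k) with hu
  have hm_eq : (m : ℝ) = u * (d * k) := by rw [hu]; field_simp
  have hmd : (m : ℝ) / d = u * k := by rw [hu]; field_simp
  have hlog : m * log 2 ≤ d * k * (1 + log (u * k)) := by
    have := log_le_log (by positivity) h
    rw [log_pow, log_pow, log_pow, mul_div_assoc, log_mul (exp_pos 1).ne' (by positivity),
      log_exp, hmd] at this
    linarith
  have hu_bound : u ≤ 8 * logb 2 (k + 1) := by
    refine le_eight_mul_logb_of_mul_log_two_le (by positivity) (by exact_mod_cast hk) ?_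
    rw [hm_eq] at hlog
    nlinarith
  rw [hm_eq]
  nlinarith

end Counting

/-- Blumer–Ehrenfeucht–Haussler–Warmuth upper bound: there is an absolute
constant `c > 0` such that for any set system of VC-dimension at most `d` and
any `k ≥ 1`, the `k`-fold union has VC-dimension at most `c·d·k·log₂(k+1)`. -/
theorem vcdim_kUnion_upper :
    ∃ c : ℝ, 0 < c ∧
      ∀ (X : Type) (R : Set (Set X)) (d k : ℕ), 1 ≤ d → 1 ≤ k →
        VCdim R ≤ (d : ℕ∞) →
        ∀ Y : Finset X, Shatters (kUnion R k) ↑Y →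
          (Y.card : ℝ) ≤ c * d * k * Real.logb 2 (k + 1) := by
  refine ⟨8, by norm_num, fun X R d k hd hk hR Y hY => ?_⟩
  rcases lt_or_ge #Y d with hYd | hdY
  · have hlogb : 1 ≤ Real.logb 2 (k + 1) := by
      rw [Real.le_logb_iff_rpow_le one_lt_two (by positivity), Real.rpow_one]
      exact_mod_cast Nat.succ_le_succ hk
    have hk' : (1 : ℝ) ≤ k := by exact_mod_cast hk
    have hd' : (1 : ℝ) ≤ d := by exact_mod_cast hd
    have hYd' : (#Y : ℝ) ≤ d := by exact_mod_cast hYd.le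
    nlinarith [mul_le_mul hk' hlogb zero_le_one (by positivity)]
  · refine le_eight_mul_logb_of_two_pow_le (by omega) hd hk ?_
    calc (2 : ℝ) ^ #Y ≤ (#(traceFamily R Y) : ℝ) ^ k := by
          exact_mod_cast two_pow_card_le_card_traceFamily_pow hY
      _ ≤ ((Real.exp 1 * #Y / d) ^ d) ^ k := by
          gcongr
          exact (Nat.cast_le.2 (card_traceFamily_le hR Y)).trans
            (card_filter_card_le_le_exp_mul_pow hd hdY)
end

section
/- Sauer–Shelah composition bound: if Y is a finite set of size m shattered by the k-fold union R^{k∪} of a family R of VC-dimension at most d (with m ≥ d ≥ 1), then 2^m ≤ (e·m/d)^{dk}. -/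
/-!
Restrict everything to `Y`. By the Sauer–Shelah lemma the trace of `R` on `Y` has at most
`∑_{i ≤ d} C(m, i) ≤ (e m / d)^d` members, and every trace of a `k`-fold union is a union of
`k` traces of members of `R`, so there are at most `(e m / d)^(d k)` of those. Shattering means
that all `2^m` subsets of `Y` occur as such traces.
-/

open Real
open scoped Finset

open Finset in
/-- Weighting the `i`-th term by `(d / m)^(i - d) ≥ 1` turns the sum into a truncated binomial
expansion of `(1 + d / m)^m ≤ e^d`. -/
theorem sum_choose_le_exp_mul_div_pow {d m : ℕ} (hdm : d ≤ m) :
    ∑ i ∈ Iic d, (m.choose i : ℝ) ≤ (exp 1 * m / d) ^ d := by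
  rcases d.eq_zero_or_pos with rfl | hd
  · simp [Finset.Iic_eq_Icc]
  have hm : 0 < m := hd.trans_le hdm
  set r : ℝ := d / m with hr
  have hr0 : 0 < r := by positivity
  have hr1 : r ≤ 1 := div_le_one_of_le₀ (by exact_mod_cast hdm) (by positivity)
  have key : r ^ d * ∑ i ∈ Iic d, (m.choose i : ℝ) ≤ exp d :=
    calc r ^ d * ∑ i ∈ Iic d, (m.choose i : ℝ)
        ≤ ∑ i ∈ Iic d, r ^ i * 1 ^ (m - i) * m.choose i := by
          rw [mul_sum]
          refine sum_le_sum fun i hi => ?_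
          rw [one_pow, mul_one]
          exact mul_le_mul_of_nonneg_right (pow_le_pow_of_le_one hr0.le hr1 (mem_Iic.1 hi))
            (by positivity)
      _ ≤ ∑ i ∈ range (m + 1), r ^ i * 1 ^ (m - i) * m.choose i :=
          sum_le_sum_of_subset_of_nonneg
            (fun i hi => mem_range.2 (Nat.lt_succ_of_le ((mem_Iic.1 hi).trans hdm)))
            (fun _ _ _ => by positivity)
      _ = (1 + r) ^ m := by rw [add_comm (1 : ℝ) r, add_pow]
      _ ≤ exp r ^ m := by gcongr; linarith [add_one_le_exp r]
      _ = exp d := by rw [← exp_nat_mul, hr]; field_simp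
  have hpow : (exp 1 * m / d) ^ d = exp d / r ^ d := by
    rw [hr, ← exp_one_pow, div_pow, div_pow, mul_pow]
    field_simp
  rwa [hpow, le_div_iff₀' (by positivity)]

theorem card_le_VCdim {X : Type*} {R : Set (Set X)} {s : Finset X} (h : Shatters R ↑s) :
    (#s : ℕ∞) ≤ VCdim R :=
  le_iSup₂ (f := fun (s : Finset X) (_ : Shatters R ↑s) => (#s : ℕ∞)) s h

section Trace

open Classical Finset

variable {X : Type*}

noncomputable def traceOn (Y : Finset X) (S : Set X) : Finset Y := {x | ↑x ∈ S}

/-- `R|_Y`, as a family of subsets of the subtype `Y`, so that Mathlib's Sauer–Shelah lemma for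
finsets over a finite type applies. -/
noncomputable def trace (R : Set (Set X)) (Y : Finset X) : Finset (Finset Y) :=
  {A | ∃ S ∈ R, traceOn Y S = A}

variable {R : Set (Set X)} {Y : Finset X}

theorem mem_traceOn {S : Set X} {x : Y} : x ∈ traceOn Y S ↔ ↑x ∈ S := by
  simp [traceOn]

theorem mem_trace {A : Finset Y} : A ∈ trace R Y ↔ ∃ S ∈ R, traceOn Y S = A := by
  simp [trace]

theorem traceOn_iUnion {ι : Type*} [Fintype ι] (f : ι → Set X) :
    traceOn Y (⋃ i, f i) = univ.biUnion fun i => traceOn Y (f i) := by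
  ext x
  simp [mem_traceOn]

theorem trace_eq_univ_of_shatters (h : Shatters R ↑Y) : trace R Y = univ := by
  refine eq_univ_of_forall fun A => mem_trace.2 ?_
  obtain ⟨S, hS, hYS⟩ := h (Subtype.val '' (A : Set Y)) (by rintro _ ⟨x, -, rfl⟩; exact x.2)
  refine ⟨S, hS, ext fun x => ?_⟩
  have hx : (↑x ∈ (Y : Set X) ∩ S) ↔ ↑x ∈ Subtype.val '' (A : Set Y) := by rw [hYS]
  simpa [mem_traceOn, x.2] using hx

theorem card_trace_of_shatters (h : Shatters R ↑Y) : #(trace R Y) = 2 ^ #Y := by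
  rw [trace_eq_univ_of_shatters h, card_univ, Fintype.card_finset, Fintype.card_coe]

theorem shatters_map_of_shatters_trace {s : Finset Y} (h : (trace R Y).Shatters s) :
    Shatters R ↑(s.map (Function.Embedding.subtype _)) := by
  intro Z hZ
  obtain ⟨A, hA, hsA⟩ := h (filter_subset (fun x : Y => ↑x ∈ Z) s)
  obtain ⟨S, hS, rfl⟩ := mem_trace.1 hA
  refine ⟨S, hS, Set.ext fun x => ?_⟩
  constructor
  · rintro ⟨hxs, hxS⟩
    obtain ⟨y, hy, rfl⟩ := mem_map.1 hxs
    have hy' : y ∈ s ∩ traceOn Y S := mem_inter.2 ⟨hy, mem_traceOn.2 hxS⟩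
    rw [hsA] at hy'
    exact (mem_filter.1 hy').2
  · intro hxZ
    obtain ⟨y, hy, rfl⟩ := mem_map.1 (hZ hxZ)
    have hy' : y ∈ s.filter (fun x : Y => ↑x ∈ Z) := mem_filter.2 ⟨hy, hxZ⟩
    rw [← hsA] at hy'
    exact ⟨mem_map_of_mem _ hy, mem_traceOn.1 (mem_inter.1 hy').2⟩

theorem vcDim_trace_le {d : ℕ} (hR : VCdim R ≤ d) : (trace R Y).vcDim ≤ d := by
  refine Finset.sup_le fun s hs => ?_
  have hcard := (card_le_VCdim (shatters_map_of_shatters_trace (mem_shatterer.1 hs))).trans hR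
  rwa [card_map, Nat.cast_le] at hcard

theorem card_trace_le_sum_choose {d : ℕ} (hR : VCdim R ≤ d) :
    #(trace R Y) ≤ ∑ i ∈ Iic d, (#Y).choose i :=
  calc #(trace R Y) ≤ #(trace R Y).shatterer := card_le_card_shatterer _
    _ ≤ ∑ i ∈ Iic (trace R Y).vcDim, (Fintype.card Y).choose i := card_shatterer_le_sum_vcDim
    _ ≤ ∑ i ∈ Iic d, (#Y).choose i := by
      rw [Fintype.card_coe]
      exact sum_le_sum_of_subset (Iic_subset_Iic.2 (vcDim_trace_le hR))

theorem card_trace_kUnion_le (k : ℕ) : #(trace (kUnion R k) Y) ≤ #(trace R Y) ^ k := by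
  have hsub : trace (kUnion R k) Y ⊆
      (Fintype.piFinset fun _ : Fin k => trace R Y).image fun g => univ.biUnion g := by
    intro A hA
    obtain ⟨_, ⟨f, hf, rfl⟩, rfl⟩ := mem_trace.1 hA
    exact mem_image.2 ⟨fun i => traceOn Y (f i),
      Fintype.mem_piFinset.2 fun i => mem_trace.2 ⟨f i, hf i, rfl⟩, (traceOn_iUnion f).symm⟩
  calc #(trace (kUnion R k) Y) ≤ _ := card_le_card hsub
    _ ≤ _ := card_image_le
    _ = #(trace R Y) ^ k := by simp

end Trace

theorem sauer_shelah_composition_general {X : Type*} (R : Set (Set X)) (d k m : ℕ)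
    (hmd : d ≤ m)
    (hVC : VCdim R ≤ (d : ℕ∞))
    (Y : Finset X) (hm : Y.card = m) (hY : Shatters (kUnion R k) ↑Y) :
    (2 : ℝ) ^ m ≤ (Real.exp 1 * m / d) ^ (d * k) := by
  have htrace : #(trace R Y) ≤ ∑ i ∈ Finset.Iic d, m.choose i :=
    hm ▸ card_trace_le_sum_choose hVC
  calc (2 : ℝ) ^ m = #(trace (kUnion R k) Y) := by
        rw [card_trace_of_shatters hY, hm]; push_cast; rfl
    _ ≤ (#(trace R Y) : ℝ) ^ k := by exact_mod_cast card_trace_kUnion_le k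
    _ ≤ (∑ i ∈ Finset.Iic d, (m.choose i : ℝ)) ^ k := by gcongr; exact_mod_cast htrace
    _ ≤ ((exp 1 * m / d) ^ d) ^ k := by gcongr; exact sum_choose_le_exp_mul_div_pow hmd
    _ = (exp 1 * m / d) ^ (d * k) := (pow_mul _ _ _).symm

/-- Sauer–Shelah composition bound: if a set `Y` of size `m ≥ d ≥ 1` is
shattered by the `k`-fold union of a family of VC-dimension at most `d`, then
`2^m ≤ (e·m/d)^{dk}`. -/
theorem sauer_shelah_composition {X : Type*} (R : Set (Set X)) (d k m : ℕ)
    (hd : 1 ≤ d) (hk : 1 ≤ k) (hmd : d ≤ m)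
    (hVC : VCdim R ≤ (d : ℕ∞))
    (Y : Finset X) (hm : Y.card = m) (hY : Shatters (kUnion R k) ↑Y) :
    (2 : ℝ) ^ m ≤ (Real.exp 1 * m / d) ^ (d * k) :=
  sauer_shelah_composition_general R d k m hmd hVC Y hm hY
end

section
/- Suppose there exists a set P of n points in ℝ^d, all with positive coordinates, such that for every subset P' ⊆ P there exist k closed half-spaces each of the form {x : ∑ᵢ xᵢ/bᵢ ≤ d} (with all bᵢ > 0) whose union contains P' and is disjoint from P \ P'. Then there exists a set H of n hyperplanes in ℝ^d such that the family {{h ∈ H : h ∩ Δ ≠ ∅} : Δ an open k-dimensional simplex in ℝ^d} shatters H; in particular its VC-dimension is at least n. -/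
/-- A hyperplane in ℝ^d. -/
def IsHyperplane (d : ℕ) (h : Set (Fin d → ℝ)) : Prop :=
  ∃ (a : Fin d → ℝ) (c : ℝ), a ≠ 0 ∧ h = {x | ∑ i, a i * x i = c}

/-- An open `k`-dimensional simplex in ℝ^d: the relative interior of the convex
hull of `k+1` affinely independent points. -/
def IsOpenSimplex (d k : ℕ) (Δ : Set (Fin d → ℝ)) : Prop :=
  ∃ v : Fin (k + 1) → (Fin d → ℝ), AffineIndependent ℝ v ∧
    Δ = intrinsicInterior ℝ (convexHull ℝ (Set.range v))

/-- The set system induced on a set `H` of hyperplanes by open `k`-dimensional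
simplices: each simplex selects the hyperplanes it meets. -/
def SimplexSystem (d k : ℕ) (H : Set (Set (Fin d → ℝ))) : Set (Set (Set (Fin d → ℝ))) :=
  {S | ∃ Δ : Set (Fin d → ℝ), IsOpenSimplex d k Δ ∧ S = {h ∈ H | (h ∩ Δ).Nonempty}}

open Set Module Topology Filter

theorem AffineIndependent.finCons {k V P : Type*} [Field k] [AddCommGroup V] [Module k V]
    [AddTorsor V P] {n : ℕ} {v : Fin n → P} {x : P} (hv : AffineIndependent k v)
    (hx : x ∉ affineSpan k (range v)) : AffineIndependent k (Fin.cons x v : Fin (n + 1) → P) := by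
  refine AffineIndependent.affineIndependent_of_notMem_span (i := 0) ?_ ?_
  · convert hv.comp_embedding (finSuccAboveEquiv (0 : Fin (n + 1))).symm.toEmbedding with i
    obtain ⟨i, hi⟩ := i
    obtain ⟨j, rfl⟩ := Fin.exists_succ_eq.2 hi
    exact congrArg v ((Equiv.eq_symm_apply _).2 (by ext; simp [finSuccAboveEquiv_apply]))
  · have : (Fin.cons x v : Fin (n + 1) → P) '' {i | i ≠ 0} = range v := by
      ext y; simp [Fin.exists_fin_succ]
    rwa [this]

theorem exists_affineIndependent_forall_mem_nhds {V P : Type*} [NormedAddCommGroup V]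
    [NormedSpace ℝ V] [MetricSpace P] [NormedAddTorsor V P] {m : ℕ} (hm : m ≤ finrank ℝ V)
    (z : Fin (m + 1) → P) (U : Fin (m + 1) → Set P) (hU : ∀ i, U i ∈ 𝓝 (z i)) :
    ∃ v : Fin (m + 1) → P, AffineIndependent ℝ v ∧ ∀ i, v i ∈ U i := by
  induction m with
  | zero =>
    exact ⟨z, affineIndependent_of_subsingleton (ι := Fin 1) ℝ z, fun i => mem_of_mem_nhds (hU i)⟩
  | succ m ih =>
    obtain ⟨v, hv, hvU⟩ := ih (by omega) (fun i => z i.succ) (fun i => U i.succ) fun i => hU i.succ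
    have hspan : affineSpan ℝ (range v) ≠ ⊤ := by
      intro htop
      have := finrank_vectorSpan_range_le ℝ v (Fintype.card_fin _)
      rw [AffineSubspace.vectorSpan_eq_top_of_affineSpan_eq_top ℝ V P htop, finrank_top] at this
      omega
    obtain ⟨x, hxU, hx⟩ : ∃ x ∈ interior (U 0), x ∉ affineSpan ℝ (range v) := by
      by_contra! h
      refine hspan (top_unique ?_)
      rw [← isOpen_interior.affineSpan_eq_top ⟨z 0, mem_interior_iff_mem_nhds.2 (hU 0)⟩]
      exact affineSpan_le.2 h
    exact ⟨Fin.cons x v, hv.finCons hx,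
      Fin.cases (interior_subset hxU) fun i => by simpa using hvU i⟩

open Finset in
theorem exists_pos_weights_sum_mul_eq {ι : Type*} [Fintype ι] (a : ι → ℝ) {c : ℝ} {i j : ι}
    (hi : a i < c) (hj : c < a j) :
    ∃ t : ι → ℝ, (∀ l, 0 < t l) ∧ ∑ l, t l = 1 ∧ ∑ l, t l * a l = c := by
  classical
  have hN : (0 : ℝ) < Fintype.card ι := Nat.cast_pos.2 (Fintype.card_pos_iff.2 ⟨i⟩)
  set m := (∑ l, a l) / Fintype.card ι
  have mix : ∀ l θ, 0 ≤ θ → θ < 1 →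
      ∃ t : ι → ℝ, (∀ l, 0 < t l) ∧ ∑ l, t l = 1 ∧ ∑ l, t l * a l = m + θ * (a l - m) := by
    intro l θ hθ₀ hθ₁
    refine ⟨fun l' => (1 - θ) / Fintype.card ι + if l' = l then θ else 0, fun l' => ?_, ?_, ?_⟩
    · have : 0 < (1 - θ) / Fintype.card ι := div_pos (by linarith) hN
      dsimp only
      split_ifs <;> linarith
    · simp only [sum_add_distrib, sum_ite_eq', Finset.mem_univ, if_true, sum_const, card_univ,
        nsmul_eq_mul]
      field_simp
      ring
    · simp only [add_mul, sum_add_distrib, ite_mul, zero_mul, sum_ite_eq', Finset.mem_univ,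
        if_true, ← mul_sum, m]
      field_simp
      ring
  obtain ⟨l, hl, hθ₀, hθ₁⟩ :
      ∃ l, a l - m ≠ 0 ∧ 0 ≤ (c - m) / (a l - m) ∧ (c - m) / (a l - m) < 1 := by
    rcases le_or_gt m c with hmc | hcm
    · exact ⟨j, by linarith, div_nonneg (by linarith) (by linarith),
        (div_lt_one (by linarith)).2 (by linarith)⟩
    · exact ⟨i, by linarith, div_nonneg_of_nonpos (by linarith) (by linarith),
        (div_lt_one_of_neg (by linarith)).2 (by linarith)⟩
  obtain ⟨t, ht, ht₁, hta⟩ := mix l _ hθ₀ hθ₁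
  exact ⟨t, ht, ht₁, by rw [hta, div_mul_cancel₀ _ hl]; ring⟩

theorem convexHull_range_subset_setOf_lt {ι E : Type*} [AddCommGroup E] [Module ℝ E] {v : ι → E}
    (f : E →ₗ[ℝ] ℝ) {c : ℝ} (h : ∀ i, c < f (v i)) :
    convexHull ℝ (range v) ⊆ {x | c < f x} :=
  convexHull_min (range_subset_iff.2 h) (convex_halfSpace_gt f.isLinear c)

section Simplex

open Finset

variable {ι E : Type*} [Fintype ι] [NormedAddCommGroup E] [NormedSpace ℝ E]

theorem AffineIndependent.sum_smul_mem_intrinsicInterior_convexHull {v : ι → E}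
    (hv : AffineIndependent ℝ v) {t : ι → ℝ} (ht : ∀ i, 0 < t i) (ht₁ : ∑ i, t i = 1) :
    ∑ i, t i • v i ∈ intrinsicInterior ℝ (convexHull ℝ (range v)) := by
  obtain ⟨i₀⟩ : Nonempty ι := by
    by_contra h
    simp [not_nonempty_iff.1 h] at ht₁
  let W := vectorSpan ℝ (range v)
  let v' : ι → W := fun i =>
    ⟨v i -ᵥ v i₀, vsub_mem_vectorSpan ℝ (mem_range_self i) (mem_range_self i₀)⟩
  let φ : W →ᵃⁱ[ℝ] E :=
    (AffineIsometryEquiv.constVAdd ℝ E (v i₀)).toAffineIsometry.comp W.subtypeₗᵢ.toAffineIsometry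
  have hφ : φ.toAffineMap ∘ v' = v := by
    ext i : 1
    simp [φ, v']
  have hv' : AffineIndependent ℝ v' := AffineIndependent.of_comp φ.toAffineMap (hφ ▸ hv)
  have hcard : Fintype.card ι = finrank ℝ W + 1 := by
    obtain ⟨n, hn⟩ := Nat.exists_eq_add_of_lt (Fintype.card_pos_iff.2 ⟨i₀⟩)
    rw [hv.finrank_vectorSpan (n := n) (by omega)]
    omega
  let b : AffineBasis ι ℝ W := ⟨v', hv', hv'.affineSpan_eq_top_iff_card_eq_finrank_add_one.2 hcard⟩
  have hy : univ.affineCombination ℝ v' t ∈ interior (convexHull ℝ (range v')) := by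
    change _ ∈ interior (convexHull ℝ (range b))
    rw [b.interior_convexHull]
    intro i
    exact (b.coord_apply_combination_of_mem (mem_univ i) ht₁).symm ▸ ht i
  have himage : convexHull ℝ (range v) = φ '' convexHull ℝ (range v') := by
    rw [← hφ, range_comp, ← AffineMap.image_convexHull]
    rfl
  rw [himage, φ.intrinsicInterior_image]
  refine ⟨_, interior_subset_intrinsicInterior hy, ?_⟩
  rw [← univ.affineCombination_eq_linear_combination v t ht₁, ← hφ]
  exact univ.map_affineCombination v' t ht₁ φ.toAffineMap

theorem AffineIndependent.exists_mem_intrinsicInterior_convexHull_eq {v : ι → E}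
    (hv : AffineIndependent ℝ v) (f : E →ₗ[ℝ] ℝ) {c : ℝ} {i j : ι} (hi : f (v i) < c)
    (hj : c < f (v j)) : ∃ x ∈ intrinsicInterior ℝ (convexHull ℝ (range v)), f x = c := by
  obtain ⟨t, ht, ht₁, htc⟩ := exists_pos_weights_sum_mul_eq (fun l => f (v l)) hi hj
  exact ⟨_, hv.sum_smul_mem_intrinsicInterior_convexHull ht ht₁, by simpa using htc⟩

theorem AffineIndependent.levelSet_inter_intrinsicInterior_convexHull_nonempty_iff
    {v : ι → E} (hv : AffineIndependent ℝ v) (f : E →ₗ[ℝ] ℝ) {c : ℝ} {i₀ : ι}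
    (h₀ : c < f (v i₀)) (hne : ∀ i, f (v i) ≠ c) :
    ({x | f x = c} ∩ intrinsicInterior ℝ (convexHull ℝ (range v))).Nonempty ↔
      ∃ i, f (v i) < c := by
  constructor
  · rintro ⟨x, hx, hxΔ⟩
    by_contra! h
    have := convexHull_range_subset_setOf_lt f (fun i => (h i).lt_of_ne' (hne i))
      (intrinsicInterior_subset hxΔ)
    exact this.ne' hx
  · rintro ⟨i, hi⟩
    obtain ⟨x, hxΔ, hx⟩ := hv.exists_mem_intrinsicInterior_convexHull_eq f hi h₀
    exact ⟨x, hx, hxΔ⟩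

end Simplex

theorem ContinuousAt.eventually_lt_iff_and_lt_iff {X : Type*} [TopologicalSpace X] {g : X → ℝ}
    {z : X} (hg : ContinuousAt g z) {c : ℝ} (hz : g z ≠ c) :
    ∀ᶠ x in 𝓝 z, (g x < c ↔ g z < c) ∧ (c < g x ↔ c < g z) := by
  rcases hz.lt_or_gt with hz | hz
  · filter_upwards [hg.eventually_lt continuousAt_const hz] with x hx
    constructor <;> constructor <;> intro <;> linarith
  · filter_upwards [continuousAt_const.eventually_lt hg hz] with x hx
    constructor <;> constructor <;> intro <;> linarith

theorem eventually_mul_lt_iff_le {a : ℝ} (ha : 0 < a) (c : ℝ) :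
    ∀ᶠ s in 𝓝[<] 1, (s * a < c ↔ a ≤ c) ∧ (c < s * a ↔ c < a) := by
  rcases le_or_gt a c with hac | hca
  · filter_upwards [self_mem_nhdsWithin] with s (hs : s < 1)
    have : s * a < a := by nlinarith
    constructor <;> constructor <;> intro <;> linarith
  · have : Tendsto (· * a) (𝓝[<] 1) (𝓝 a) := by
      simpa using ((continuous_mul_const a).tendsto 1).mono_left nhdsWithin_le_nhds
    filter_upwards [this.eventually (lt_mem_nhds hca)] with s (hs : c < s * a)
    constructor <;> constructor <;> intro <;> linarith

theorem exists_affineIndependent_forall_levelSet_meets_iff {ι : Type*} [Fintype ι] [Nonempty ι]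
    {k : ℕ} (hk : k ≤ Fintype.card ι) (P : Finset (ι → ℝ)) (hP : ∀ p ∈ P, ∀ i, 0 < p i)
    (q : Fin k → ι → ℝ) (hq : ∀ j i, 0 < q j i) (c : ℝ) :
    ∃ v : Fin (k + 1) → ι → ℝ, AffineIndependent ℝ v ∧ ∀ p ∈ P,
      (({x | p ⬝ᵥ x = c} ∩ intrinsicInterior ℝ (convexHull ℝ (range v))).Nonempty ↔
        ∃ j, p ⬝ᵥ q j ≤ c) := by
  have hpos : ∀ p ∈ P, ∀ w : ι → ℝ, (∀ i, 0 < w i) → 0 < p ⬝ᵥ w := fun p hp w hw =>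
    Finset.sum_pos (fun i _ => mul_pos (hP p hp i) (hw i)) Finset.univ_nonempty
  obtain ⟨M, hM⟩ : ∃ M : ℝ, ∀ p ∈ P, c < M * (p ⬝ᵥ 1) :=
    ((eventually_all_finset P).2 fun p hp =>
      (tendsto_id.atTop_mul_const (hpos p hp 1 fun _ => one_pos)).eventually_gt_atTop c).exists
  obtain ⟨s, hs⟩ : ∃ s : ℝ, ∀ p ∈ P, ∀ j,
      (s * (p ⬝ᵥ q j) < c ↔ p ⬝ᵥ q j ≤ c) ∧ (c < s * (p ⬝ᵥ q j) ↔ c < p ⬝ᵥ q j) :=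
    ((eventually_all_finset P).2 fun p hp => eventually_all.2 fun j =>
      eventually_mul_lt_iff_le (hpos p hp (q j) (hq j)) c).exists
  let z : Fin (k + 1) → ι → ℝ := Fin.cons (M • 1) fun j => s • q j
  have hz : ∀ p ∈ P, ∀ i, p ⬝ᵥ z i ≠ c := by
    intro p hp i
    refine Fin.cases ?_ (fun j => ?_) i
    · simpa [z, dotProduct_smul] using (hM p hp).ne'
    · simp only [z, Fin.cons_succ, dotProduct_smul, smul_eq_mul, ne_iff_lt_or_gt, hs p hp j]
      exact le_or_gt _ _
  obtain ⟨v, hv, hvz⟩ := exists_affineIndependent_forall_mem_nhds (by simpa using hk) z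
    (fun i => {x | ∀ p ∈ P, (p ⬝ᵥ x < c ↔ p ⬝ᵥ z i < c) ∧ (c < p ⬝ᵥ x ↔ c < p ⬝ᵥ z i)})
    fun i => (eventually_all_finset P).2 fun p hp =>
      (continuous_const.dotProduct continuous_id).continuousAt.eventually_lt_iff_and_lt_iff
        (hz p hp i)
  refine ⟨v, hv, fun p hp => ?_⟩
  have h₀ : c < p ⬝ᵥ v 0 := ((hvz 0 p hp).2).2 (by simpa [z, dotProduct_smul] using hM p hp)
  have hne : ∀ i, p ⬝ᵥ v i ≠ c := fun i => by
    rw [ne_iff_lt_or_gt, (hvz i p hp).1, (hvz i p hp).2, ← ne_iff_lt_or_gt]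
    exact hz p hp i
  refine (hv.levelSet_inter_intrinsicInterior_convexHull_nonempty_iff
    (dotProductBilin ℝ ℝ p) h₀ hne).trans ?_
  simp only [dotProductBilin_apply_apply, Fin.exists_fin_succ, not_lt_of_gt h₀, false_or]
  refine exists_congr fun j => ?_
  rw [(hvz j.succ p hp).1]
  simpa [z, dotProduct_smul] using (hs p hp j).1

theorem eq_of_setOf_dotProduct_eq {ι : Type*} [Fintype ι] {p q : ι → ℝ} {c : ℝ} (hc : c ≠ 0)
    (hp : ∀ i, p i ≠ 0) (h : {x | p ⬝ᵥ x = c} = {x | q ⬝ᵥ x = c}) : p = q := by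
  classical
  funext i
  have hx : Pi.single i (c / p i) ∈ {x | q ⬝ᵥ x = c} := by
    rw [← h]
    simp [dotProduct_single, mul_div_cancel₀ _ (hp i)]
  simp only [mem_ofPred_eq, dotProduct_single] at hx
  field_simp at hx
  exact ((div_eq_one_iff_eq (hp i)).1 hx).symm

theorem shatters_image_of_forall_subset {X Y : Type*} (R : Set (Set X)) (f : Y → X) (P : Finset Y)
    (h : ∀ P' ⊆ P, ∃ S ∈ R, ∀ p ∈ P, f p ∈ S ↔ p ∈ P') : Shatters R (f '' P) := by
  classical
  intro Z hZ
  obtain ⟨S, hS, hSP⟩ := h (P.filter (f · ∈ Z)) (Finset.filter_subset _ _)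
  refine ⟨S, hS, Set.ext fun x => ⟨?_, fun hx => ⟨hZ hx, ?_⟩⟩⟩
  · rintro ⟨⟨p, hp, rfl⟩, hpS⟩
    exact (Finset.mem_filter.1 ((hSP p hp).1 hpS)).2
  · obtain ⟨p, hp, rfl⟩ := hZ hx
    exact (hSP p hp).2 (Finset.mem_filter.2 ⟨hp, hx⟩)

theorem simplices_shatter_hyperplanes_general (d k n : ℕ) (hd : 2 ≤ d) (hkd : k ≤ d)
    (P : Finset (Fin d → ℝ)) (hP : P.card = n) (hpos : ∀ p ∈ P, ∀ i, 0 < p i)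
    (hcut : ∀ P' ⊆ P, ∃ b : Fin k → (Fin d → ℝ), (∀ j i, 0 < b j i) ∧
      ∀ p ∈ P, (p ∈ P' ↔ ∃ j, ∑ i, p i / b j i ≤ (d : ℝ))) :
    ∃ H : Finset (Set (Fin d → ℝ)), H.card = n ∧ (∀ h ∈ H, IsHyperplane d h) ∧
      Shatters (SimplexSystem d k ↑H) ↑H ∧
      (n : ℕ∞) ≤ VCdim (SimplexSystem d k ↑H) := by
  classical
  have : Nonempty (Fin d) := ⟨⟨0, by omega⟩⟩
  let hyp : (Fin d → ℝ) → Set (Fin d → ℝ) := fun p => {x | p ⬝ᵥ x = d}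
  have hcard : (P.image hyp).card = n := by
    rw [Finset.card_image_of_injOn fun p hp q _ h => eq_of_setOf_dotProduct_eq
      (Nat.cast_ne_zero.2 (by omega)) (fun i => (hpos p hp i).ne') h, hP]
  have hshatter : Shatters (SimplexSystem d k ↑(P.image hyp)) ↑(P.image hyp) := by
    rw [Finset.coe_image]
    refine shatters_image_of_forall_subset _ hyp P fun P' hP' => ?_
    obtain ⟨b, hb, hbP⟩ := hcut P' hP'
    obtain ⟨v, hv, hvP⟩ := exists_affineIndependent_forall_levelSet_meets_iff
      (by simpa using hkd) P hpos (fun j => (b j)⁻¹) (fun j i => inv_pos.2 (hb j i)) d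
    refine ⟨_, ⟨_, ⟨v, hv, rfl⟩, rfl⟩, fun p hp => ?_⟩
    have hdiv : ∀ j, ∑ i, p i / b j i = p ⬝ᵥ (b j)⁻¹ := fun j => by
      simp [dotProduct, div_eq_mul_inv]
    simp only [hbP p hp, hdiv, ← hvP p hp]
    exact and_iff_right (mem_image_of_mem hyp hp)
  refine ⟨P.image hyp, hcard, ?_, hshatter, ?_⟩
  · simp only [Finset.mem_image]
    rintro _ ⟨p, hp, rfl⟩
    exact ⟨p, d, fun h0 => (hpos p hp ⟨0, by omega⟩).ne' (congrFun h0 _), rfl⟩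
  · exact hcard ▸ le_iSup₂_of_le _ hshatter le_rfl

/-- Reduction for Theorem 2: if every subset of an `n`-point set `P ⊆ ℝ^d` with
positive coordinates is cut out by a union of `k` half-spaces of the special
form `{x : ∑ᵢ xᵢ/bᵢ ≤ d}`, then there are `n` hyperplanes shattered by the set
system of open `k`-dimensional simplices, so that system has VC-dimension ≥ n. -/
theorem simplices_shatter_hyperplanes (d k n : ℕ) (hd : 2 ≤ d) (hk : 1 ≤ k) (hkd : k ≤ d)
    (P : Finset (Fin d → ℝ)) (hP : P.card = n) (hpos : ∀ p ∈ P, ∀ i, 0 < p i)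
    (hcut : ∀ P' ⊆ P, ∃ b : Fin k → (Fin d → ℝ), (∀ j i, 0 < b j i) ∧
      ∀ p ∈ P, (p ∈ P' ↔ ∃ j, ∑ i, p i / b j i ≤ (d : ℝ))) :
    ∃ H : Finset (Set (Fin d → ℝ)), H.card = n ∧ (∀ h ∈ H, IsHyperplane d h) ∧
      Shatters (SimplexSystem d k ↑H) ↑H ∧
      (n : ℕ∞) ≤ VCdim (SimplexSystem d k ↑H) :=
  simplices_shatter_hyperplanes_general d k n hd hkd P hP hpos hcut
end
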